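/- Let γ ≥ 1 and α > −1. Let σ and ω be weights on the upper half-plane H, let Φ be a normalized Young function, and let μ be a positive Borel measure on H. Assume there is a constant C > 0 such that μ(Q_I) ≤ C |Q_I|_{ω,α}^γ for every bounded interval I ⊂ ℝ. Then for every compactly supported measurable function f and every t > 0, μ({z ∈ H : M^d_{Φ,σ,α} f(z) > t}) ≤ C |{z ∈ H : M^d_{Φ,σ,α} f(z) > t}|_{ω,α}^γ. -/

import Mathlib

open MeasureTheory Set Filter
open scoped ENNReal NNReal

noncomputable section

/-- The upper half-plane `H = {z : 0 < Im z}`. -/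
def UHP : Set ℂ := {z : ℂ | 0 < z.im}

/-- The measure `dV_α = y^α dx dy` supported on the upper half-plane. -/
def Vm (α : ℝ) : Measure ℂ :=
  MeasureTheory.volume.withDensity
    (fun z => if 0 < z.im then ENNReal.ofReal (z.im ^ α) else 0)

/-- The Carleson square `Q_I` attached to the interval `I = (a, b)`. -/
def Qbox (a b : ℝ) : Set ℂ :=
  {z : ℂ | z.re ∈ Set.Ioo a b ∧ z.im ∈ Set.Ioo 0 (b - a)}

/-- The weighted measure `|E|_{ω,α} = ∫_E ω dV_α` of a set `E`. -/
def wvol (α : ℝ) (ω : ℂ → ℝ) (E : Set ℂ) : ℝ≥0∞ :=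
  ∫⁻ z in E, ENNReal.ofReal (ω z) ∂(Vm α)

/-- A weight: a nonnegative locally integrable function on the upper half-plane. -/
def IsWeight (α : ℝ) (ω : ℂ → ℝ) : Prop :=
  Measurable ω ∧ (∀ z, 0 ≤ ω z) ∧ MeasureTheory.LocallyIntegrableOn ω UHP (Vm α)

/-- A normalized Young function: continuous, convex, increasing on `[0,∞)`,
with `Φ 0 = 0`, `Φ 1 = 1` and `Φ t → ∞` as `t → ∞`. -/
structure IsNormalizedYoung (Φ : ℝ → ℝ) : Prop where
  cont : ContinuousOn Φ (Set.Ici 0)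
  convex : ConvexOn ℝ (Set.Ici 0) Φ
  mono : MonotoneOn Φ (Set.Ici 0)
  map_zero : Φ 0 = 0
  map_one : Φ 1 = 1
  tendsto_atTop : Filter.Tendsto Φ Filter.atTop Filter.atTop

/-- The `Δ₂` (doubling) condition with constant `K`. -/
def Delta2 (Φ : ℝ → ℝ) (K : ℝ) : Prop :=
  1 < K ∧ ∀ t : ℝ, 0 ≤ t → Φ (2 * t) ≤ K * Φ t

/-- The class `B_p`: `Δ₂` together with `∫_c^∞ Φ(t)/t^p dt/t < ∞` for some `c > 0`. -/
def InBp (Φ : ℝ → ℝ) (p : ℝ) : Prop :=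
  (∃ K : ℝ, Delta2 Φ K) ∧
    ∃ c : ℝ, 0 < c ∧ (∫⁻ t in Set.Ioi c, ENNReal.ofReal (Φ t / t ^ (p + 1))) < ⊤

/-- The Luxemburg norm `‖f‖_{Q_I, Φ, ω, α}` over the Carleson square of `I = (a,b)`. -/
def luxNorm (α : ℝ) (Φ : ℝ → ℝ) (ω : ℂ → ℝ) (a b : ℝ) (f : ℂ → ℂ) : ℝ≥0∞ :=
  ⨅ (t : ℝ) (_ : 0 < t)
    (_ : (∫⁻ z in Qbox a b, ENNReal.ofReal (Φ (‖f z‖ / t) * ω z) ∂(Vm α)) /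
          wvol α ω (Qbox a b) ≤ 1),
    ENNReal.ofReal t

/-- The maximal function `M_{Φ,ω,α} f`. -/
def maxFn (α : ℝ) (Φ : ℝ → ℝ) (ω : ℂ → ℝ) (f : ℂ → ℂ) (z : ℂ) : ℝ≥0∞ :=
  ⨆ (a : ℝ) (b : ℝ) (_ : z ∈ Qbox a b), luxNorm α Φ ω a b f

/-- The dyadic grid `D^β`, as a set of pairs of endpoints. -/
def dyadicGrid (β : ℝ) : Set (ℝ × ℝ) :=
  {I : ℝ × ℝ | ∃ j m : ℤ, I.1 = (2 : ℝ) ^ j * (m + (-1 : ℝ) ^ j * β) ∧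
    I.2 = (2 : ℝ) ^ j * (m + 1 + (-1 : ℝ) ^ j * β)}

/-- The dyadic maximal function `M^{d,β}_{Φ,ω,α} f`. -/
def dyadicMax (β α : ℝ) (Φ : ℝ → ℝ) (ω : ℂ → ℝ) (f : ℂ → ℂ) (z : ℂ) : ℝ≥0∞ :=
  ⨆ (I : ℝ × ℝ) (_ : I ∈ dyadicGrid β) (_ : z ∈ Qbox I.1 I.2),
    luxNorm α Φ ω I.1 I.2 f

/-- The Hardy–Littlewood maximal function `M_α g` of the upper half-plane. -/
def hlMax (α : ℝ) (g : ℂ → ℝ) (z : ℂ) : ℝ≥0∞ :=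
  ⨆ (a : ℝ) (b : ℝ) (_ : z ∈ Qbox a b),
    (∫⁻ w in Qbox a b, ENNReal.ofReal |g w| ∂(Vm α)) / Vm α (Qbox a b)

/-- The weighted Hardy–Littlewood maximal function `M_{ω,α} f`. -/
def whlMax (α : ℝ) (ω : ℂ → ℝ) (f : ℂ → ℂ) (z : ℂ) : ℝ≥0∞ :=
  ⨆ (a : ℝ) (b : ℝ) (_ : z ∈ Qbox a b),
    (∫⁻ w in Qbox a b, ENNReal.ofReal (‖f w‖ * ω w) ∂(Vm α)) /
      wvol α ω (Qbox a b)

/-- The Békollè–Bonami constant `[ω]_{B_{p,α}}`. -/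
def BBnorm (α p : ℝ) (ω : ℂ → ℝ) : ℝ≥0∞ :=
  ⨆ (a : ℝ) (b : ℝ) (_ : a < b),
    (wvol α ω (Qbox a b) / Vm α (Qbox a b)) *
      ((∫⁻ z in Qbox a b, ENNReal.ofReal (ω z) ^ (1 - p / (p - 1)) ∂(Vm α)) /
          Vm α (Qbox a b)) ^ (p - 1)

/-- Membership in the Békollè–Bonami class `B_{p,α}`. -/
def InBB (α p : ℝ) (ω : ℂ → ℝ) : Prop := BBnorm α p ω < ⊤

/-- Membership in `𝔹_{∞,α} = ⋃_{p>1} B_{p,α}`. -/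
def InBBinfty (α : ℝ) (ω : ℂ → ℝ) : Prop := ∃ p : ℝ, 1 < p ∧ InBB α p ω

/-- The quantity `∫_H |f|^p ω dV_α`. -/
def lpInt (α p : ℝ) (ω : ℂ → ℝ) (f : ℂ → ℂ) : ℝ≥0∞ :=
  ∫⁻ z, ENNReal.ofReal (‖f z‖) ^ p * ENNReal.ofReal (ω z) ∂(Vm α)

/-- The function `K_μ(z) = sup_{I : z ∈ Q_I} μ(Q_I)/|Q_I|_{ω,α}`. -/
def Kmu (α : ℝ) (ω : ℂ → ℝ) (μ : Measure ℂ) (z : ℂ) : ℝ≥0∞ :=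
  ⨆ (a : ℝ) (b : ℝ) (_ : z ∈ Qbox a b), μ (Qbox a b) / wvol α ω (Qbox a b)

/-- `ω` is `α`-doubling with doubling function `φ` and constant `K`. -/
structure AlphaDoubling (α : ℝ) (ω : ℂ → ℝ) (φ : ℝ≥0∞ → ℝ≥0∞) (K : ℝ≥0∞) : Prop where
  mono : Monotone φ
  map_one : φ 1 = 1
  one_le : 1 ≤ K
  bound : ∀ a b : ℝ, ∀ E ⊆ Qbox a b, MeasurableSet E →
    wvol α ω (Qbox a b) / wvol α ω E ≤ K * φ (Vm α (Qbox a b) / Vm α E)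

/-- The complementary (conjugate) Young function `Ψ(s) = sup_{t ≥ 0} (t s − Φ(t))`,
valued in `ℝ≥0∞`. -/
def conjugateYoung (Φ : ℝ → ℝ) (s : ℝ) : ℝ≥0∞ :=
  ⨆ (t : ℝ) (_ : 0 ≤ t), ENNReal.ofReal (t * s - Φ t)

/-- The unweighted Luxemburg norm for an `ℝ≥0∞`-valued Young function. -/
def luxNormE (α : ℝ) (Ψ : ℝ → ℝ≥0∞) (a b : ℝ) (g : ℂ → ℝ) : ℝ≥0∞ :=
  ⨅ (t : ℝ) (_ : 0 < t)
    (_ : (∫⁻ z in Qbox a b, Ψ (|g z| / t) ∂(Vm α)) / Vm α (Qbox a b) ≤ 1),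
    ENNReal.ofReal t

/-- The Békollè–Bonami `B_{∞,α}` constant
`[ω]_{B_{∞,α}} = sup_I |Q_I|_{ω,α}⁻¹ ∫_{Q_I} M_α(ω χ_{Q_I}) dV_α`. -/
def BBinftyNorm (α : ℝ) (ω : ℂ → ℝ) : ℝ≥0∞ :=
  ⨆ (a : ℝ) (b : ℝ) (_ : a < b),
    (∫⁻ z in Qbox a b, hlMax α ((Qbox a b).indicator ω) z ∂(Vm α)) /
      wvol α ω (Qbox a b)

end

/-! The superlevel set `{M^d f > t}` is the union of the dyadic Carleson boxes on which the
Luxemburg norm of `f` exceeds `t`. Dyadic boxes are nested or disjoint, so after truncating the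
scale from above, the union is a disjoint union of maximal boxes. On these, the Carleson
condition and the superadditivity `∑ xᵢ^γ ≤ (∑ xᵢ)^γ` for `γ ≥ 1` give the bound, and letting the
truncation level go to infinity gives it for the whole set. -/

def dyadicBox (p : ℤ × ℤ) : Set ℂ :=
  Qbox ((2 : ℝ) ^ p.1 * p.2) ((2 : ℝ) ^ p.1 * (p.2 + 1))

theorem measurableSet_Qbox (a b : ℝ) : MeasurableSet (Qbox a b) :=
  (measurableSet_Ioo.preimage Complex.measurable_re).inter
    (measurableSet_Ioo.preimage Complex.measurable_im)

theorem measurableSet_dyadicBox (p : ℤ × ℤ) : MeasurableSet (dyadicBox p) :=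
  measurableSet_Qbox _ _

theorem dyadicBox_left_lt_right (p : ℤ × ℤ) :
    (2 : ℝ) ^ p.1 * p.2 < (2 : ℝ) ^ p.1 * (p.2 + 1) := by
  gcongr
  linarith

theorem Ioo_subset_Ioo_of_Qbox_subset {a b c d : ℝ} (hab : a < b) (h : Qbox a b ⊆ Qbox c d) :
    Ioo a b ⊆ Ioo c d := fun x hx =>
  (@h ⟨x, (b - a) / 2⟩ ⟨hx, by constructor <;> dsimp only <;> linarith⟩).1

theorem dyadicBox_subset_of_le {p q : ℤ × ℤ} (hj : p.1 ≤ q.1)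
    (hpq : (dyadicBox p ∩ dyadicBox q).Nonempty) : dyadicBox p ⊆ dyadicBox q := by
  obtain ⟨j, m⟩ := p
  obtain ⟨j', m'⟩ := q
  obtain ⟨k, rfl⟩ := Int.le.dest hj
  set N : ℤ := 2 ^ k
  have hscale : (2 : ℝ) ^ (j + k) = 2 ^ j * N := by
    rw [zpow_add₀ two_ne_zero, zpow_natCast]; push_cast [N]; rfl
  have h2j : (0 : ℝ) < 2 ^ j := zpow_pos two_pos j
  have hN : (1 : ℝ) ≤ N := by push_cast [N]; exact one_le_pow₀ one_le_two
  obtain ⟨z, ⟨⟨hz₁, hz₂⟩, -⟩, ⟨hz₃, hz₄⟩, -⟩ := hpq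
  simp only [dyadicBox, Qbox, mem_Ioo, hscale] at hz₁ hz₂ hz₃ hz₄ ⊢
  -- `z.re / 2^j` lies in both `(m, m + 1)` and `(N m', N (m' + 1))`, so the integer endpoints nest
  have hleft : N * m' ≤ m := by
    have : ((N * m' : ℤ) : ℝ) < ((m + 1 : ℤ) : ℝ) := by push_cast; nlinarith
    exact Int.lt_add_one_iff.mp (by exact_mod_cast this)
  have hright : m + 1 ≤ N * (m' + 1) := by
    have : ((m : ℤ) : ℝ) < ((N * (m' + 1) : ℤ) : ℝ) := by push_cast; nlinarith
    exact_mod_cast this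
  have hleft' : (N : ℝ) * m' ≤ m := by exact_mod_cast hleft
  have hright' : (m : ℝ) + 1 ≤ N * (m' + 1) := by exact_mod_cast hright
  rintro w ⟨⟨hw₁, hw₂⟩, hw₃, hw₄⟩
  refine ⟨⟨?_, ?_⟩, hw₃, ?_⟩ <;> nlinarith

theorem eq_of_dyadicBox_subset {p q : ℤ × ℤ} (h : dyadicBox p ⊆ dyadicBox q) (hj : q.1 ≤ p.1) :
    p = q := by
  obtain ⟨j, m⟩ := p
  obtain ⟨j', m'⟩ := q
  obtain ⟨hleft, hright⟩ := (Ioo_subset_Ioo_iff (dyadicBox_left_lt_right _)).mp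
    (Ioo_subset_Ioo_of_Qbox_subset (dyadicBox_left_lt_right _) h)
  have hlen : (2 : ℝ) ^ j ≤ 2 ^ j' := by linarith
  have hjj : j = j' := le_antisymm ((zpow_le_zpow_iff_right₀ one_lt_two).mp hlen) hj
  subst hjj
  have h2j : (0 : ℝ) < 2 ^ j := zpow_pos two_pos j
  have hmm : (m : ℝ) = m' :=
    le_antisymm (by linarith [(mul_le_mul_iff_right₀ h2j).mp hright])
      ((mul_le_mul_iff_right₀ h2j).mp hleft)
  rw [Int.cast_inj.mp hmm]

theorem ENNReal.sum_rpow_le_rpow_sum {ι : Type*} (s : Finset ι) (f : ι → ℝ≥0∞) {γ : ℝ}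
    (hγ : 1 ≤ γ) : ∑ i ∈ s, f i ^ γ ≤ (∑ i ∈ s, f i) ^ γ := by
  induction s using Finset.cons_induction with
  | empty => simp [ENNReal.zero_rpow_of_pos (zero_lt_one.trans_le hγ)]
  | cons a s ha ih =>
    rw [Finset.sum_cons, Finset.sum_cons]
    exact (add_le_add_right ih _).trans (ENNReal.add_rpow_le_rpow_add _ _ hγ)

theorem ENNReal.tsum_rpow_le_rpow_tsum {ι : Type*} (f : ι → ℝ≥0∞) {γ : ℝ} (hγ : 1 ≤ γ) :
    ∑' i, f i ^ γ ≤ (∑' i, f i) ^ γ := by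
  rw [ENNReal.tsum_eq_iSup_sum]
  exact iSup_le fun s => (ENNReal.sum_rpow_le_rpow_sum s f hγ).trans
    (ENNReal.rpow_le_rpow (ENNReal.sum_le_tsum s) (zero_le_one.trans hγ))

theorem exists_maximal_dyadicBox {T : Set (ℤ × ℤ)} {n : ℤ} (hT : ∀ p ∈ T, p.1 ≤ n)
    {p : ℤ × ℤ} (hp : p ∈ T) :
    ∃ q ∈ T, dyadicBox p ⊆ dyadicBox q ∧ ∀ r ∈ T, dyadicBox q ⊆ dyadicBox r → q = r := by
  obtain ⟨j, ⟨m, hq, hpq⟩, hj⟩ := Int.exists_greatest_of_bdd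
    (P := fun j => ∃ m, (j, m) ∈ T ∧ dyadicBox p ⊆ dyadicBox (j, m))
    ⟨n, fun j ⟨m, hm, _⟩ => hT _ hm⟩ ⟨p.1, p.2, hp, subset_rfl⟩
  exact ⟨(j, m), hq, hpq, fun r hr hqr =>
    eq_of_dyadicBox_subset hqr (hj r.1 ⟨r.2, hr, hpq.trans hqr⟩)⟩

section CarlesonBound

variable {μ ν : Measure ℂ} {γ : ℝ} {c : ℝ≥0∞}

theorem measure_biUnion_dyadicBox_le_of_bddAbove (hγ : 1 ≤ γ) {T : Set (ℤ × ℤ)} {n : ℤ}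
    (hT : ∀ p ∈ T, p.1 ≤ n) (hbox : ∀ p ∈ T, μ (dyadicBox p) ≤ c * ν (dyadicBox p) ^ γ) :
    μ (⋃ p ∈ T, dyadicBox p) ≤ c * ν (⋃ p ∈ T, dyadicBox p) ^ γ := by
  set M := {q ∈ T | ∀ r ∈ T, dyadicBox q ⊆ dyadicBox r → q = r}
  have hunion : (⋃ p ∈ T, dyadicBox p) = ⋃ q ∈ M, dyadicBox q := by
    refine (iUnion₂_subset fun p hp => ?_).antisymm (biUnion_subset_biUnion_left fun q hq => hq.1)
    obtain ⟨q, hqT, hpq, hq⟩ := exists_maximal_dyadicBox hT hp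
    exact hpq.trans (subset_biUnion_of_mem (u := dyadicBox) ⟨hqT, hq⟩)
  have hdisj : M.PairwiseDisjoint dyadicBox := by
    intro p hp q hq hne
    rw [Function.onFun, disjoint_iff_inter_eq_empty, ← not_nonempty_iff_eq_empty]
    intro hpq
    rcases le_total p.1 q.1 with h | h
    · exact hne (hp.2 q hq.1 (dyadicBox_subset_of_le h hpq))
    · exact hne (hq.2 p hp.1 (dyadicBox_subset_of_le h (inter_comm _ _ ▸ hpq))).symm
  rw [hunion]
  calc μ (⋃ q ∈ M, dyadicBox q)
      ≤ ∑' q : M, μ (dyadicBox q) := measure_biUnion_le μ M.to_countable _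
    _ ≤ ∑' q : M, c * ν (dyadicBox q) ^ γ := ENNReal.tsum_le_tsum fun q => hbox q q.2.1
    _ = c * ∑' q : M, ν (dyadicBox q) ^ γ := ENNReal.tsum_mul_left
    _ ≤ c * (∑' q : M, ν (dyadicBox q)) ^ γ := by
      gcongr; exact ENNReal.tsum_rpow_le_rpow_tsum _ hγ
    _ = c * ν (⋃ q ∈ M, dyadicBox q) ^ γ := by
      rw [measure_biUnion M.to_countable hdisj fun q _ => measurableSet_dyadicBox q]

theorem measure_biUnion_dyadicBox_le (hγ : 1 ≤ γ) {S : Set (ℤ × ℤ)}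
    (hbox : ∀ p ∈ S, μ (dyadicBox p) ≤ c * ν (dyadicBox p) ^ γ) :
    μ (⋃ p ∈ S, dyadicBox p) ≤ c * ν (⋃ p ∈ S, dyadicBox p) ^ γ := by
  set U : ℤ → Set ℂ := fun n => ⋃ p ∈ {p ∈ S | p.1 ≤ n}, dyadicBox p
  have hU : Monotone U := fun n n' hn =>
    biUnion_subset_biUnion_left fun p hp => ⟨hp.1, hp.2.trans hn⟩
  have hSU : (⋃ p ∈ S, dyadicBox p) = ⋃ n, U n := by
    refine (iUnion₂_subset fun p hp => ?_).antisymm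
      (iUnion_subset fun n => biUnion_subset_biUnion_left fun p hp => hp.1)
    exact (subset_biUnion_of_mem (u := dyadicBox) (⟨hp, le_rfl⟩ : p ∈ {q ∈ S | q.1 ≤ p.1})).trans
      (subset_iUnion U p.1)
  rw [hSU, hU.measure_iUnion]
  refine iSup_le fun n => ?_
  calc μ (U n) ≤ c * ν (U n) ^ γ :=
        measure_biUnion_dyadicBox_le_of_bddAbove hγ (fun p hp => hp.2) fun p hp => hbox p hp.1
    _ ≤ c * ν (⋃ n, U n) ^ γ := by
      gcongr
      exact subset_iUnion U n

end CarlesonBound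

theorem setOf_lt_dyadicMax_eq_biUnion (α : ℝ) (Φ : ℝ → ℝ) (σ : ℂ → ℝ) (f : ℂ → ℂ) (s : ℝ≥0∞) :
    {z | s < dyadicMax 0 α Φ σ f z} =
      ⋃ p ∈ {p : ℤ × ℤ | s < luxNorm α Φ σ (2 ^ p.1 * p.2) (2 ^ p.1 * (p.2 + 1)) f},
        dyadicBox p := by
  ext z
  simp only [dyadicMax, dyadicGrid, mem_ofPred_eq, lt_iSup_iff, mem_iUnion, exists_prop,
    mul_zero, add_zero]
  constructor
  · rintro ⟨⟨a, b⟩, ⟨j, m, rfl, rfl⟩, hz, hs⟩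
    exact ⟨(j, m), hs, hz⟩
  · rintro ⟨⟨j, m⟩, hs, hz⟩
    exact ⟨(2 ^ j * m, 2 ^ j * (m + 1)), ⟨j, m, rfl, rfl⟩, hz, hs⟩

instance Vm.instSFinite (α : ℝ) : SFinite (Vm α) := by
  unfold Vm; infer_instance

theorem wvol_eq_withDensity (α : ℝ) (ω : ℂ → ℝ) :
    wvol α ω = (Vm α).withDensity (fun z => ENNReal.ofReal (ω z)) := by
  ext s
  rw [wvol, withDensity_apply']

theorem statement9_general (γ α : ℝ) (hγ : 1 ≤ γ)
    (σ ω : ℂ → ℝ)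
    (Φ : ℝ → ℝ)
    (μ : Measure ℂ)
    (C : ℝ)
    (hcond : ∀ a b : ℝ, a < b →
      μ (Qbox a b) ≤ ENNReal.ofReal C * (wvol α ω (Qbox a b)) ^ γ)
    (f : ℂ → ℂ)
    (t : ℝ) :
    μ {z : ℂ | ENNReal.ofReal t < dyadicMax 0 α Φ σ f z}
      ≤ ENNReal.ofReal C *
          (wvol α ω {z : ℂ | ENNReal.ofReal t < dyadicMax 0 α Φ σ f z}) ^ γ := by
  rw [setOf_lt_dyadicMax_eq_biUnion, wvol_eq_withDensity]
  refine measure_biUnion_dyadicBox_le hγ fun p _ => ?_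
  rw [← wvol_eq_withDensity]
  exact hcond _ _ (dyadicBox_left_lt_right p)

/-- Lemma 2.3: if `μ(Q_I) ≤ C |Q_I|_{ω,α}^γ` for every interval,
then `μ({M^d_{Φ,σ,α} f > t}) ≤ C |{M^d_{Φ,σ,α} f > t}|_{ω,α}^γ`. -/
theorem statement9 (γ α : ℝ) (hγ : 1 ≤ γ) (hα : -1 < α)
    (σ ω : ℂ → ℝ) (hσ : IsWeight α σ) (hω : IsWeight α ω)
    (Φ : ℝ → ℝ) (hΦ : IsNormalizedYoung Φ)
    (μ : Measure ℂ) (hμ : μ UHPᶜ = 0)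
    (C : ℝ) (hC : 0 < C)
    (hcond : ∀ a b : ℝ, a < b →
      μ (Qbox a b) ≤ ENNReal.ofReal C * (wvol α ω (Qbox a b)) ^ γ)
    (f : ℂ → ℂ) (hf : Measurable f) (hfc : HasCompactSupport f)
    (t : ℝ) (ht : 0 < t) :
    μ {z : ℂ | ENNReal.ofReal t < dyadicMax 0 α Φ σ f z}
      ≤ ENNReal.ofReal C *
          (wvol α ω {z : ℂ | ENNReal.ofReal t < dyadicMax 0 α Φ σ f z}) ^ γ :=
  statement9_general γ α hγ σ ω Φ μ C hcond f t
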